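/- arXiv:2312.07752 — 5 statements merged into one kernel-verified Lean document; each statement's English description precedes it below -/
import Mathlib

section
/- Let g be a symmetric positive definite n×n real matrix and B a skew-symmetric n×n real matrix, and G = [[-g⁻¹B, g⁻¹],[g - B g⁻¹ B, B g⁻¹]]. Then the +1-eigenspace of G equals {(X, BX + gX) : X ∈ ℝⁿ}, i.e. the graph of B + g. -/
/-!
Writing `v = (x, y)`, the upper block row of `G v = v` reads `g⁻¹ (y - B x) = x`, i.e.
`y = (B + g) x`; on such vectors the lower block row holds identically, since
`(g - B g⁻¹ B) x + B g⁻¹ (B + g) x = (B + g) x`.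
-/

open Matrix

section GeneralizedMetric

variable {R m : Type*} [CommRing R] [Fintype m] [DecidableEq m]
  {g : Matrix m m R} (B : Matrix m m R) (hg : IsUnit g.det) (x y : m → R)
include hg

theorem neg_inv_mul_mulVec_add_inv_mulVec_eq_self_iff :
    -(g⁻¹ * B) *ᵥ x + g⁻¹ *ᵥ y = x ↔ y = (B + g) *ᵥ x := by
  rw [neg_mulVec, neg_add_eq_iff_eq_add]
  constructor
  · intro h
    calc y = g *ᵥ (g⁻¹ *ᵥ y) := by rw [mulVec_mulVec, mul_nonsing_inv g hg, one_mulVec]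
      _ = (B + g) *ᵥ x := by
        rw [h, mulVec_add, mulVec_mulVec, ← Matrix.mul_assoc, mul_nonsing_inv g hg,
          Matrix.one_mul, add_mulVec]
  · rintro rfl
    rw [mulVec_mulVec, Matrix.mul_add, nonsing_inv_mul g hg, add_mulVec, one_mulVec]

theorem generalizedMetric_lowerRow_mulVec_graph :
    (g - B * g⁻¹ * B) *ᵥ x + (B * g⁻¹) *ᵥ ((B + g) *ᵥ x) = (B + g) *ᵥ x := by
  rw [mulVec_mulVec, Matrix.mul_add, Matrix.mul_assoc B g⁻¹ g, nonsing_inv_mul g hg,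
    Matrix.mul_one, ← add_mulVec]
  congr 1
  abel

theorem fromBlocks_generalizedMetric_mulVec_eq_self_iff :
    fromBlocks (-(g⁻¹ * B)) g⁻¹ (g - B * g⁻¹ * B) (B * g⁻¹) *ᵥ Sum.elim x y = Sum.elim x y ↔
      y = (B + g) *ᵥ x := by
  rw [fromBlocks_mulVec, Sum.elim_comp_inl, Sum.elim_comp_inr, Sum.elim_eq_iff,
    neg_inv_mul_mulVec_add_inv_mulVec_eq_self_iff B hg]
  constructor
  · exact And.left
  · rintro rfl
    exact ⟨rfl, generalizedMetric_lowerRow_mulVec_graph B hg x⟩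

end GeneralizedMetric

theorem generalized_metric_plus_eigenspace_general {n : ℕ}
    (g B : Matrix (Fin n) (Fin n) ℝ)
    (hg : g.PosDef) :
    let G : Matrix (Fin n ⊕ Fin n) (Fin n ⊕ Fin n) ℝ :=
      Matrix.fromBlocks (-(g⁻¹ * B)) g⁻¹ (g - B * g⁻¹ * B) (B * g⁻¹)
    {v : Fin n ⊕ Fin n → ℝ | G.mulVec v = v} =
      {v : Fin n ⊕ Fin n → ℝ | ∃ X : Fin n → ℝ, v = Sum.elim X ((B + g).mulVec X)} := by
  intro G
  ext v
  rw [← Sum.elim_comp_inl_inr v]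
  simp only [Set.mem_ofPred_eq, G, Sum.elim_eq_iff, exists_eq_left',
    fromBlocks_generalizedMetric_mulVec_eq_self_iff B hg.det_pos.ne'.isUnit]

theorem generalized_metric_plus_eigenspace {n : ℕ}
    (g B : Matrix (Fin n) (Fin n) ℝ)
    (hg : g.PosDef) (hB : Bᵀ = -B) :
    let G : Matrix (Fin n ⊕ Fin n) (Fin n ⊕ Fin n) ℝ :=
      Matrix.fromBlocks (-(g⁻¹ * B)) g⁻¹ (g - B * g⁻¹ * B) (B * g⁻¹)
    {v : Fin n ⊕ Fin n → ℝ | G.mulVec v = v} =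
      {v : Fin n ⊕ Fin n → ℝ | ∃ X : Fin n → ℝ, v = Sum.elim X ((B + g).mulVec X)} :=
  generalized_metric_plus_eigenspace_general g B hg
end

section
/- Let g be a symmetric positive definite n×n real matrix and B a skew-symmetric n×n real matrix, and G = [[-g⁻¹B, g⁻¹],[g - B g⁻¹ B, B g⁻¹]]. Then the -1-eigenspace of G equals {(X, BX - gX) : X ∈ ℝⁿ}. -/
/-!
Multiplying the first block row of `G (X, Y) = -(X, Y)` by the invertible `g` turns it into
`Y = (B - g) X`, and the second block row equals `g X + B` times the first one, so it then holds
automatically.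
-/

open Matrix

variable {m R : Type*} [Fintype m] [DecidableEq m] [CommRing R]

noncomputable def generalizedMetric (g B : Matrix m m R) : Matrix (m ⊕ m) (m ⊕ m) R :=
  fromBlocks (-(g⁻¹ * B)) g⁻¹ (g - B * g⁻¹ * B) (B * g⁻¹)

variable {g : Matrix m m R} (B : Matrix m m R) (x y : m → R)

theorem neg_inv_mul_mulVec_add_inv_mulVec_eq_neg_iff (hg : IsUnit g) :
    -(g⁻¹ * B) *ᵥ x + g⁻¹ *ᵥ y = -x ↔ y = (B - g) *ᵥ x := by
  have hginv : g * g⁻¹ = 1 := mul_nonsing_inv g ((isUnit_iff_isUnit_det g).1 hg)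
  calc -(g⁻¹ * B) *ᵥ x + g⁻¹ *ᵥ y = -x
      ↔ g *ᵥ (-(g⁻¹ * B) *ᵥ x + g⁻¹ *ᵥ y) = g *ᵥ -x :=
        (mulVec_injective_of_isUnit hg).eq_iff.symm
    _ ↔ -(B *ᵥ x) + y = -(g *ᵥ x) := by
      rw [mulVec_add, mulVec_mulVec, mulVec_mulVec, mul_neg, ← mul_assoc, hginv, one_mul,
        one_mulVec, neg_mulVec, mulVec_neg]
    _ ↔ y = (B - g) *ᵥ x := by
      rw [sub_mulVec, neg_add_eq_iff_eq_add, sub_eq_add_neg, add_comm]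

theorem sub_mul_inv_mul_mulVec_add_mul_inv_mulVec :
    (g - B * g⁻¹ * B) *ᵥ x + (B * g⁻¹) *ᵥ y =
      g *ᵥ x + B *ᵥ (-(g⁻¹ * B) *ᵥ x + g⁻¹ *ᵥ y) := by
  simp only [sub_mulVec, neg_mulVec, mulVec_add, mulVec_neg, mulVec_mulVec, mul_assoc]
  abel

theorem generalizedMetric_mulVec_sumElim_eq_neg_iff (hg : IsUnit g) :
    generalizedMetric g B *ᵥ Sum.elim x y = -Sum.elim x y ↔ y = (B - g) *ᵥ x := by
  rw [generalizedMetric, fromBlocks_mulVec, Sum.elim_comp_inl, Sum.elim_comp_inr,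
    ← Sum.elim_neg_neg, Sum.elim_eq_iff,
    sub_mul_inv_mul_mulVec_add_mul_inv_mulVec,
    neg_inv_mul_mulVec_add_inv_mulVec_eq_neg_iff B x y hg]
  refine ⟨And.left, fun hy => ⟨hy, ?_⟩⟩
  rw [(neg_inv_mul_mulVec_add_inv_mulVec_eq_neg_iff B x y hg).2 hy, hy, mulVec_neg, sub_mulVec]
  abel

theorem generalized_metric_minus_eigenspace_general {n : ℕ}
    (g B : Matrix (Fin n) (Fin n) ℝ)
    (hg : g.PosDef) :
    let G : Matrix (Fin n ⊕ Fin n) (Fin n ⊕ Fin n) ℝ :=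
      Matrix.fromBlocks (-(g⁻¹ * B)) g⁻¹ (g - B * g⁻¹ * B) (B * g⁻¹)
    {v : Fin n ⊕ Fin n → ℝ | G.mulVec v = -v} =
      {v : Fin n ⊕ Fin n → ℝ | ∃ X : Fin n → ℝ, v = Sum.elim X ((B - g).mulVec X)} := by
  intro G
  ext v
  obtain ⟨x, y, rfl⟩ : ∃ x y, v = Sum.elim x y := ⟨_, _, (Sum.elim_comp_inl_inr v).symm⟩
  change generalizedMetric g B *ᵥ Sum.elim x y = -Sum.elim x y ↔
    ∃ X, Sum.elim x y = Sum.elim X ((B - g) *ᵥ X)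
  simp only [generalizedMetric_mulVec_sumElim_eq_neg_iff B x y hg.isUnit, Sum.elim_eq_iff,
    exists_eq_left']

theorem generalized_metric_minus_eigenspace {n : ℕ}
    (g B : Matrix (Fin n) (Fin n) ℝ)
    (hg : g.PosDef) (hB : Bᵀ = -B) :
    let G : Matrix (Fin n ⊕ Fin n) (Fin n ⊕ Fin n) ℝ :=
      Matrix.fromBlocks (-(g⁻¹ * B)) g⁻¹ (g - B * g⁻¹ * B) (B * g⁻¹)
    {v : Fin n ⊕ Fin n → ℝ | G.mulVec v = -v} =
      {v : Fin n ⊕ Fin n → ℝ | ∃ X : Fin n → ℝ, v = Sum.elim X ((B - g).mulVec X)} :=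
  generalized_metric_minus_eigenspace_general g B hg
end

section
/- Let g = diag(g_b, g_f) be block-diagonal symmetric positive definite with g_b of size m and g_f of size k, and B = [[B_b, B_m],[-B_mᵀ, B_f]] skew-symmetric (B_b, B_f skew-symmetric of sizes m, k). Let G be the generalized metric matrix of (g,B) and φ the T-duality map. Then G̃ = φ G φ⁻¹ is again of the form [[-g̃⁻¹B̃, g̃⁻¹],[g̃ - B̃g̃⁻¹B̃, B̃g̃⁻¹]] for some symmetric positive definite g̃ and skew-symmetric B̃, with g̃⁻¹ = [[g_b⁻¹, g_b⁻¹B_m],[B_mᵀg_b⁻¹, g_f + B_mᵀg_b⁻¹B_m - B_f g_f⁻¹ B_f]]. -/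
open Matrix

lemma realCT {a b : Type*} (A : Matrix a b ℝ) : Aᴴ = Aᵀ := by
  ext i j; simp [conjTranspose_apply]

lemma posDef_conj' {n : Type*} [Fintype n] [DecidableEq n] {M N : Matrix n n ℝ}
    (hM : M.PosDef) (hN : IsUnit N.det) : (N * M * Nᵀ).PosDef := by
  refine Matrix.PosDef.of_dotProduct_mulVec_pos ?_ (fun x hx => ?_)
  · have := isHermitian_mul_mul_conjTranspose N hM.1
    rwa [realCT] at this
  · have hx' : Nᵀ *ᵥ x ≠ 0 := by
      intro h
      apply hx
      have := congrArg (fun v => (Nᵀ)⁻¹ *ᵥ v) h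
      simpa [Matrix.mulVec_mulVec, Matrix.nonsing_inv_mul Nᵀ (by simpa using hN)] using this
    have h2 := hM.dotProduct_mulVec_pos hx'
    simp only [star_trivial] at h2 ⊢
    calc x ⬝ᵥ (N * M * Nᵀ) *ᵥ x = x ⬝ᵥ N *ᵥ (M *ᵥ (Nᵀ *ᵥ x)) := by
          rw [← Matrix.mulVec_mulVec, ← Matrix.mulVec_mulVec]
      _ = (Nᵀ *ᵥ x) ⬝ᵥ M *ᵥ (Nᵀ *ᵥ x) := by
          have hv : x ᵥ* N = Nᵀ *ᵥ x := by
            rw [← transpose_transpose N, vecMul_transpose, transpose_transpose]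
          rw [dotProduct_mulVec x N (M *ᵥ (Nᵀ *ᵥ x)), hv]
      _ > 0 := h2

lemma posDef_fromBlocks_diag {a b : Type*} [Fintype a] [Fintype b] [DecidableEq a] [DecidableEq b]
    {A : Matrix a a ℝ} {D : Matrix b b ℝ} (hA : A.PosDef) (hD : D.PosDef) :
    (fromBlocks A 0 0 D).PosDef := by
  refine Matrix.PosDef.of_dotProduct_mulVec_pos ?_ (fun x hx => ?_)
  · have hAt : Aᵀ = A := by rw [← realCT]; exact hA.1
    have hDt : Dᵀ = D := by rw [← realCT]; exact hD.1
    show _ = _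
    rw [fromBlocks_conjTranspose]
    simp only [conjTranspose_zero, realCT, hAt, hDt]
  · have hx2 : x = Sum.elim (x ∘ Sum.inl) (x ∘ Sum.inr) := by
      ext (i|i) <;> rfl
    rw [hx2]
    rw [fromBlocks_mulVec]
    simp only [zero_mulVec, add_zero, zero_add, star_trivial, sumElim_dotProduct_sumElim,
      Sum.elim_comp_inl, Sum.elim_comp_inr]
    rcases em (x ∘ Sum.inl = 0) with h1 | h1
    · have h2 : x ∘ Sum.inr ≠ 0 := by
        intro h2; apply hx; ext (i|i)
        · exact congrFun h1 i
        · exact congrFun h2 i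
      rw [h1]
      simpa using (hD.dotProduct_mulVec_pos h2)
    · have := hA.dotProduct_mulVec_pos h1
      have h2 := hD.posSemidef.dotProduct_mulVec_nonneg (x ∘ Sum.inr)
      simp only [star_trivial] at this h2
      linarith

lemma posDef_toBlocks₂₂ {a b : Type*} [Fintype a] [Fintype b] [DecidableEq a] [DecidableEq b]
    {H : Matrix (a ⊕ b) (a ⊕ b) ℝ} (hH : H.PosDef) : H.toBlocks₂₂.PosDef := by
  refine Matrix.PosDef.of_dotProduct_mulVec_pos ?_ (fun x hx => ?_)
  · ext i j
    have := hH.1.apply (Sum.inr i) (Sum.inr j)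
    simp only [star_trivial] at this
    simpa [toBlocks₂₂, conjTranspose_apply] using this
  · have hy : (Sum.elim 0 x : a ⊕ b → ℝ) ≠ 0 := by
      intro h; apply hx; ext i; exact congrFun h (Sum.inr i)
    have := hH.dotProduct_mulVec_pos hy
    rw [← fromBlocks_toBlocks H, fromBlocks_mulVec] at this
    simpa [mulVec_zero] using this
lemma gen_metric_extract {ι : Type*} [Fintype ι] [DecidableEq ι]
    {H : Matrix (ι ⊕ ι) (ι ⊕ ι) ℝ} (hH : H.PosDef)
    (hη : H * fromBlocks 0 1 1 0 * H = fromBlocks 0 1 1 0) :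
    ∃ gt Bt : Matrix ι ι ℝ, gt.PosDef ∧ Btᵀ = -Bt ∧
      fromBlocks 0 1 1 0 * H =
        fromBlocks (-(gt⁻¹ * Bt)) gt⁻¹ (gt - Bt * gt⁻¹ * Bt) (Bt * gt⁻¹) ∧
      gt⁻¹ = H.toBlocks₂₂ := by
  obtain ⟨A, X, Y, Z, hHb⟩ : ∃ A X Y Z, H = fromBlocks A X Y Z :=
    ⟨_, _, _, _, (fromBlocks_toBlocks H).symm⟩
  have hZblk : H.toBlocks₂₂ = Z := by rw [hHb, toBlocks_fromBlocks₂₂]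
  have hZ : Z.PosDef := hZblk ▸ posDef_toBlocks₂₂ hH
  have hZdet : IsUnit Z.det := isUnit_iff_ne_zero.mpr hZ.det_pos.ne'
  have hZZ : Z * Z⁻¹ = 1 := mul_nonsing_inv Z hZdet
  have hZZ' : Z⁻¹ * Z = 1 := nonsing_inv_mul Z hZdet
  have hsym := hH.1.eq
  rw [hHb, fromBlocks_conjTranspose] at hsym
  have hXY : Xᵀ = Y := by
    have := congrArg Matrix.toBlocks₂₁ hsym
    simpa [toBlocks_fromBlocks₂₁, realCT] using this
  have hZt : Zᵀ = Z := by
    have := congrArg Matrix.toBlocks₂₂ hsym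
    simpa [toBlocks_fromBlocks₂₂, realCT] using this
  rw [hHb, fromBlocks_multiply, fromBlocks_multiply] at hη
  have e12 : X * X + A * Z = 1 := by
    have := congrArg Matrix.toBlocks₁₂ hη
    simpa [toBlocks_fromBlocks₁₂] using this
  have e22 : Z * X + Y * Z = 0 := by
    have := congrArg Matrix.toBlocks₂₂ hη
    simpa [toBlocks_fromBlocks₂₂] using this
  have hY : Y = -(Z * X * Z⁻¹) := by
    have h := congrArg (fun M => M * Z⁻¹) e22
    simp only [add_mul, zero_mul, Matrix.mul_assoc, hZZ, Matrix.mul_one] at h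
    rw [← Matrix.mul_assoc] at h
    linear_combination (norm := abel) h
  refine ⟨Z⁻¹, X * Z⁻¹, hZ.inv, ?_, ?_, ?_⟩
  · rw [transpose_mul, transpose_nonsing_inv, hZt, hXY, hY]
    rw [show Z⁻¹ * -(Z * X * Z⁻¹) = -((Z⁻¹ * Z) * (X * Z⁻¹)) by
      simp [Matrix.mul_assoc]]
    rw [hZZ', Matrix.one_mul]
  · have hgtinv : (Z⁻¹)⁻¹ = Z := nonsing_inv_nonsing_inv Z hZdet
    rw [hHb, fromBlocks_multiply, hgtinv]
    simp only [Matrix.zero_mul, Matrix.one_mul, Matrix.mul_zero, Matrix.mul_one,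
      add_zero, zero_add]
    have bTL : -(Z * (X * Z⁻¹)) = Y := by
      rw [show Z * (X * Z⁻¹) = (Z * X) * Z⁻¹ from (Matrix.mul_assoc _ _ _).symm, ← hY]
    have bBR : X * Z⁻¹ * Z = X := by rw [Matrix.mul_assoc, hZZ', Matrix.mul_one]
    have bBL : Z⁻¹ - X * Z⁻¹ * Z * (X * Z⁻¹) = A := by
      rw [bBR]
      have h := congrArg (fun M => M * Z⁻¹) e12
      simp only [add_mul, Matrix.one_mul, Matrix.mul_assoc, hZZ, Matrix.mul_one] at h
      nth_rewrite 1 [← h]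
      exact add_sub_cancel_left _ _
    rw [bTL, bBL, bBR]
  · rw [nonsing_inv_nonsing_inv Z hZdet, hZblk]

lemma gen_metric_H {ι : Type*} [Fintype ι] [DecidableEq ι] {g B : Matrix ι ι ℝ}
    (hg : g.PosDef) (hB : Bᵀ = -B) :
    (fromBlocks (g - B * g⁻¹ * B) (B * g⁻¹) (-(g⁻¹ * B)) g⁻¹).PosDef ∧
    fromBlocks (g - B * g⁻¹ * B) (B * g⁻¹) (-(g⁻¹ * B)) g⁻¹ * fromBlocks 0 1 1 0 *
      fromBlocks (g - B * g⁻¹ * B) (B * g⁻¹) (-(g⁻¹ * B)) g⁻¹ = fromBlocks 0 1 1 0 := by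
  have hgdet : IsUnit g.det := isUnit_iff_ne_zero.mpr hg.det_pos.ne'
  have hgg : g * g⁻¹ = 1 := mul_nonsing_inv g hgdet
  have hgg' : g⁻¹ * g = 1 := nonsing_inv_mul g hgdet
  have hc1 : ∀ M : Matrix ι ι ℝ, g⁻¹ * (g * M) = M := fun M => by
    rw [← Matrix.mul_assoc, hgg', Matrix.one_mul]
  have hc2 : ∀ M : Matrix ι ι ℝ, g * (g⁻¹ * M) = M := fun M => by
    rw [← Matrix.mul_assoc, hgg, Matrix.one_mul]
  constructor
  · have hfact : fromBlocks (g - B * g⁻¹ * B) (B * g⁻¹) (-(g⁻¹ * B)) g⁻¹ =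
        (fromBlocks 1 B 0 1) * (fromBlocks g 0 0 g⁻¹) * (fromBlocks 1 B 0 1)ᵀ := by
      rw [fromBlocks_transpose, hB, fromBlocks_multiply, fromBlocks_multiply, transpose_one,
        transpose_zero]
      rw [fromBlocks_inj]
      refine ⟨?_, ?_, ?_, ?_⟩ <;>
        simp [Matrix.mul_neg, sub_eq_add_neg, Matrix.mul_assoc]
    rw [hfact]
    refine posDef_conj' (posDef_fromBlocks_diag hg hg.inv) ?_
    rw [det_fromBlocks_zero₂₁]
    simp
  · rw [fromBlocks_multiply, fromBlocks_multiply, fromBlocks_inj]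
    refine ⟨?_, ?_, ?_, ?_⟩ <;>
      · simp only [Matrix.mul_zero, Matrix.zero_mul, Matrix.mul_one, Matrix.one_mul,
          add_zero, zero_add, Matrix.mul_sub, Matrix.sub_mul, Matrix.mul_neg,
          Matrix.neg_mul, Matrix.mul_assoc, hgg, hgg', hc1, hc2, Matrix.mul_one]
        abel

lemma fromBlocks_sub {a b c d : Type*} (A A' : Matrix a c ℝ) (B B' : Matrix a d ℝ)
    (C C' : Matrix b c ℝ) (D D' : Matrix b d ℝ) :
    fromBlocks A B C D - fromBlocks A' B' C' D' =
      fromBlocks (A - A') (B - B') (C - C') (D - D') := by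
  simp [sub_eq_add_neg, fromBlocks_neg, fromBlocks_add]

theorem Tdual_generalized_metric_form {m k : ℕ}
    (gb : Matrix (Fin m) (Fin m) ℝ) (gf : Matrix (Fin k) (Fin k) ℝ)
    (Bb : Matrix (Fin m) (Fin m) ℝ) (Bf : Matrix (Fin k) (Fin k) ℝ)
    (Bm : Matrix (Fin m) (Fin k) ℝ)
    (hgb : gb.PosDef) (hgf : gf.PosDef)
    (hBb : Bbᵀ = -Bb) (hBf : Bfᵀ = -Bf) :
    let g : Matrix (Fin m ⊕ Fin k) (Fin m ⊕ Fin k) ℝ := Matrix.fromBlocks gb 0 0 gf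
    let B : Matrix (Fin m ⊕ Fin k) (Fin m ⊕ Fin k) ℝ := Matrix.fromBlocks Bb Bm (-Bmᵀ) Bf
    let G : Matrix ((Fin m ⊕ Fin k) ⊕ (Fin m ⊕ Fin k)) ((Fin m ⊕ Fin k) ⊕ (Fin m ⊕ Fin k)) ℝ :=
      Matrix.fromBlocks (-(g⁻¹ * B)) g⁻¹ (g - B * g⁻¹ * B) (B * g⁻¹)
    let φ : Matrix ((Fin m ⊕ Fin k) ⊕ (Fin m ⊕ Fin k)) ((Fin m ⊕ Fin k) ⊕ (Fin m ⊕ Fin k)) ℝ :=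
      Matrix.fromBlocks
        (Matrix.fromBlocks 1 0 0 0) (Matrix.fromBlocks 0 0 0 (-1))
        (Matrix.fromBlocks 0 0 0 (-1)) (Matrix.fromBlocks 1 0 0 0)
    ∃ (gt Bt : Matrix (Fin m ⊕ Fin k) (Fin m ⊕ Fin k) ℝ),
      gt.PosDef ∧ Btᵀ = -Bt ∧
      φ * G * φ⁻¹ =
        Matrix.fromBlocks (-(gt⁻¹ * Bt)) gt⁻¹ (gt - Bt * gt⁻¹ * Bt) (Bt * gt⁻¹) ∧
      gt⁻¹ = Matrix.fromBlocks gb⁻¹ (gb⁻¹ * Bm) (Bmᵀ * gb⁻¹)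
        (gf + Bmᵀ * gb⁻¹ * Bm - Bf * gf⁻¹ * Bf) := by
  intro g B G φ
  set η : Matrix ((Fin m ⊕ Fin k) ⊕ (Fin m ⊕ Fin k)) ((Fin m ⊕ Fin k) ⊕ (Fin m ⊕ Fin k)) ℝ :=
    fromBlocks 0 1 1 0 with hηdef
  -- basic facts on g and B
  have hg : g.PosDef := posDef_fromBlocks_diag hgb hgf
  have hB : Bᵀ = -B := by
    show (fromBlocks Bb Bm (-Bmᵀ) Bf)ᵀ = -(fromBlocks Bb Bm (-Bmᵀ) Bf)
    rw [fromBlocks_transpose, fromBlocks_neg, hBb, hBf, transpose_neg, transpose_transpose,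
      neg_neg]
  have hgbdet : IsUnit gb.det := isUnit_iff_ne_zero.mpr hgb.det_pos.ne'
  have hgfdet : IsUnit gf.det := isUnit_iff_ne_zero.mpr hgf.det_pos.ne'
  have hginv : g⁻¹ = fromBlocks gb⁻¹ 0 0 gf⁻¹ := by
    refine inv_eq_left_inv ?_
    rw [show g = fromBlocks gb 0 0 gf from rfl, fromBlocks_multiply]
    simp [nonsing_inv_mul gb hgbdet, nonsing_inv_mul gf hgfdet, fromBlocks_one]
  -- the symmetric generalized metric H
  set H : Matrix ((Fin m ⊕ Fin k) ⊕ (Fin m ⊕ Fin k)) ((Fin m ⊕ Fin k) ⊕ (Fin m ⊕ Fin k)) ℝ :=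
    fromBlocks (g - B * g⁻¹ * B) (B * g⁻¹) (-(g⁻¹ * B)) g⁻¹ with hHdef
  obtain ⟨hHpd, hHη⟩ := gen_metric_H hg hB
  rw [← hηdef, ← hHdef] at hHη
  have hG : G = η * H := by
    rw [hηdef, hHdef, fromBlocks_multiply]
    show G = _
    rw [show G = fromBlocks (-(g⁻¹ * B)) g⁻¹ (g - B * g⁻¹ * B) (B * g⁻¹) from rfl]
    simp
  -- facts about φ
  have hPP : (fromBlocks 1 0 0 0 : Matrix (Fin m ⊕ Fin k) (Fin m ⊕ Fin k) ℝ) *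
      fromBlocks 1 0 0 0 = fromBlocks 1 0 0 0 := by
    rw [fromBlocks_multiply]; simp
  have hQQ : (fromBlocks 0 0 0 (-1) : Matrix (Fin m ⊕ Fin k) (Fin m ⊕ Fin k) ℝ) *
      fromBlocks 0 0 0 (-1) = fromBlocks 0 0 0 1 := by
    rw [fromBlocks_multiply]; simp
  have hPQ : (fromBlocks 1 0 0 0 : Matrix (Fin m ⊕ Fin k) (Fin m ⊕ Fin k) ℝ) *
      fromBlocks 0 0 0 (-1) = 0 := by
    rw [fromBlocks_multiply, ← fromBlocks_zero]; simp
  have hQP : (fromBlocks 0 0 0 (-1) : Matrix (Fin m ⊕ Fin k) (Fin m ⊕ Fin k) ℝ) *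
      fromBlocks 1 0 0 0 = 0 := by
    rw [fromBlocks_multiply, ← fromBlocks_zero]; simp
  have hPQ1 : (fromBlocks 1 0 0 0 : Matrix (Fin m ⊕ Fin k) (Fin m ⊕ Fin k) ℝ) +
      fromBlocks 0 0 0 1 = 1 := by
    rw [fromBlocks_add, ← fromBlocks_one]; simp
  have hφφ : φ * φ = 1 := by
    show fromBlocks _ _ _ _ * fromBlocks _ _ _ _ = 1
    rw [fromBlocks_multiply, hPP, hQQ, hPQ, hQP]
    simp only [add_zero, zero_add]
    rw [hPQ1, add_comm (fromBlocks 0 0 0 (1 : Matrix (Fin k) (Fin k) ℝ)), hPQ1, fromBlocks_one]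
  have hφinv : φ⁻¹ = φ := inv_eq_left_inv hφφ
  have hφt : φᵀ = φ := by
    show (fromBlocks _ _ _ _)ᵀ = _
    rw [fromBlocks_transpose]
    simp [fromBlocks_transpose]
    rfl
  have hφdet : IsUnit φ.det := IsUnit.of_mul_eq_one _ (by rw [← det_mul, hφφ, det_one])
  have hφη : φ * η * φ = η := by
    rw [hηdef]
    show fromBlocks _ _ _ _ * fromBlocks _ _ _ _ * fromBlocks _ _ _ _ = _
    rw [fromBlocks_multiply]
    simp only [Matrix.mul_zero, Matrix.mul_one, add_zero, zero_add]
    rw [fromBlocks_multiply, hPP, hQQ, hPQ, hQP]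
    simp only [add_zero, zero_add]
    rw [hPQ1, add_comm (fromBlocks 0 0 0 (1 : Matrix (Fin k) (Fin k) ℝ)), hPQ1]
  have hcomm : φ * η = η * φ := by
    have h := congrArg (fun M => M * φ) hφη
    simpa [Matrix.mul_assoc, hφφ, Matrix.mul_one] using h
  -- the transformed metric
  set Ht : Matrix ((Fin m ⊕ Fin k) ⊕ (Fin m ⊕ Fin k)) ((Fin m ⊕ Fin k) ⊕ (Fin m ⊕ Fin k)) ℝ :=
    φ * H * φ with hHtdef
  have hHtpd : Ht.PosDef := by
    have := posDef_conj' hHpd hφdet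
    rwa [hφt] at this
  have hHtη : Ht * η * Ht = η := by
    rw [hHtdef]
    have expand : φ * H * φ * η * (φ * H * φ) = φ * (H * (φ * η * φ) * H) * φ := by
      simp only [Matrix.mul_assoc]
    rw [expand, hφη, hHη, hφη]
  obtain ⟨gt, Bt, hgtpd, hBtskew, hform, hgtinv⟩ := gen_metric_extract hHtpd hHtη
  rw [← hηdef] at hform
  refine ⟨gt, Bt, hgtpd, hBtskew, ?_, ?_⟩
  · rw [hφinv, hG]
    rw [show φ * (η * H) * φ = (φ * η) * (H * φ) by simp only [Matrix.mul_assoc], hcomm,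
      show η * φ * (H * φ) = η * (φ * H * φ) by simp only [Matrix.mul_assoc], ← hHtdef, hform]
  · rw [hgtinv, hHtdef, hHdef]
    have hgB : g⁻¹ * B = fromBlocks (gb⁻¹ * Bb) (gb⁻¹ * Bm) (-(gf⁻¹ * Bmᵀ)) (gf⁻¹ * Bf) := by
      rw [hginv, show B = fromBlocks Bb Bm (-Bmᵀ) Bf from rfl, fromBlocks_multiply]
      simp only [Matrix.zero_mul, Matrix.mul_zero, neg_zero, add_zero, zero_add, Matrix.mul_neg]
    have hBg : B * g⁻¹ = fromBlocks (Bb * gb⁻¹) (Bm * gf⁻¹) (-(Bmᵀ * gb⁻¹)) (Bf * gf⁻¹) := by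
      rw [hginv, show B = fromBlocks Bb Bm (-Bmᵀ) Bf from rfl, fromBlocks_multiply]
      simp only [Matrix.zero_mul, Matrix.mul_zero, neg_zero, add_zero, zero_add, Matrix.neg_mul]
    have hBgB : B * g⁻¹ * B = fromBlocks
        (Bb * gb⁻¹ * Bb + -(Bm * gf⁻¹ * Bmᵀ)) (Bb * gb⁻¹ * Bm + Bm * gf⁻¹ * Bf)
        (-(Bmᵀ * gb⁻¹) * Bb + -(Bf * gf⁻¹ * Bmᵀ)) (-(Bmᵀ * gb⁻¹) * Bm + Bf * gf⁻¹ * Bf) := by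
      rw [hBg, show B = fromBlocks Bb Bm (-Bmᵀ) Bf from rfl, fromBlocks_multiply]
      simp only [Matrix.mul_neg]
    have ha : g - B * g⁻¹ * B = fromBlocks
        (gb - (Bb * gb⁻¹ * Bb + -(Bm * gf⁻¹ * Bmᵀ))) (0 - (Bb * gb⁻¹ * Bm + Bm * gf⁻¹ * Bf))
        (0 - (-(Bmᵀ * gb⁻¹) * Bb + -(Bf * gf⁻¹ * Bmᵀ)))
        (gf - (-(Bmᵀ * gb⁻¹) * Bm + Bf * gf⁻¹ * Bf)) := by
      rw [hBgB, show g = fromBlocks gb 0 0 gf from rfl, fromBlocks_sub]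
    have hc : -(g⁻¹ * B) = fromBlocks (-(gb⁻¹ * Bb)) (-(gb⁻¹ * Bm)) (gf⁻¹ * Bmᵀ) (-(gf⁻¹ * Bf)) := by
      rw [hgB, fromBlocks_neg, neg_neg]
    rw [ha, hc, hBg, hginv]
    rw [show φ = fromBlocks (fromBlocks 1 0 0 0) (fromBlocks 0 0 0 (-1))
        (fromBlocks 0 0 0 (-1)) (fromBlocks 1 0 0 0) from rfl]
    rw [fromBlocks_multiply, fromBlocks_multiply, toBlocks_fromBlocks₂₂]
    simp only [fromBlocks_multiply, fromBlocks_add, Matrix.zero_mul, Matrix.mul_zero,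
      Matrix.one_mul, Matrix.mul_one, Matrix.neg_mul, Matrix.mul_neg, add_zero, zero_add,
      neg_zero, neg_neg, zero_sub, sub_zero]
    rw [fromBlocks_inj]
    refine ⟨?_, ?_, ?_, ?_⟩ <;> abel
end

section
/- Let g = diag(g_b, g_f), B = [[B_b, B_m],[-B_mᵀ, B_f]] as above, and define B̃_f = -g_f⁻¹B_f(g_f - B_f g_f⁻¹B_f)⁻¹, B̃_m = -B_m B̃_f, B̃_b = B_b - B̃_m B_mᵀ, B̃ = [[B̃_b, B̃_m],[-B̃_mᵀ, B̃_f]], and g̃ = ([[g_b⁻¹, g_b⁻¹B_m],[B_mᵀg_b⁻¹, g_f + B_mᵀg_b⁻¹B_m - B_f g_f⁻¹B_f]])⁻¹. Then B̃ g̃⁻¹ = [[B_b g_b⁻¹, B_b g_b⁻¹ B_m + B_m g_f⁻¹ B_f],[0, -g_f⁻¹ B_f]]. -/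
/-!
Put `S = g_f - B_f g_f⁻¹ B_f = g_f + B_fᵀ g_f⁻¹ B_f`, which is positive definite, so that
`B̃_f = -g_f⁻¹ B_f S⁻¹`. Since `S (g_f⁻¹ B_f) = (B_f g_f⁻¹) S`, the matrix `B̃_f` is again
skew-symmetric. The matrix inverted in `g̃` is a block matrix whose Schur complement with respect
to `g_b⁻¹` is `S`, so it is invertible and `g̃⁻¹` is that block matrix itself. Multiplying the
blocks out, skew-symmetry of `B̃_f` kills the lower left block and `B̃_f S = -g_f⁻¹ B_f` gives the
rest.
-/

open Matrix

section Block

variable {m n K : Type*} [Fintype m] [Fintype n] [CommRing K]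

theorem Matrix.fromBlocks_mul_fromBlocks_of_transpose_eq_neg (Bb : Matrix m m K)
    (Bm : Matrix m n K) {T : Matrix n n K} (hT : Tᵀ = -T) (A : Matrix m m K) (D : Matrix n n K) :
    fromBlocks (Bb - -(Bm * T) * Bmᵀ) (-(Bm * T)) (-(-(Bm * T))ᵀ) T *
        fromBlocks A (A * Bm) (Bmᵀ * A) D =
      fromBlocks (Bb * A) (Bb * A * Bm - Bm * T * (D - Bmᵀ * A * Bm)) 0
        (T * (D - Bmᵀ * A * Bm)) := by
  simp only [fromBlocks_multiply, transpose_neg, transpose_mul, hT, neg_neg,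
    Matrix.neg_mul, Matrix.sub_mul, Matrix.mul_sub, Matrix.mul_assoc]
  congr 1 <;> abel

variable [DecidableEq m] [DecidableEq n]

theorem Matrix.isUnit_fromBlocks_inv₁₁_iff {A : Matrix m m K} (hA : IsUnit A)
    {B : Matrix m n K} {C : Matrix n m K} {D : Matrix n n K} :
    IsUnit (fromBlocks A⁻¹ (A⁻¹ * B) (C * A⁻¹) D) ↔ IsUnit (D - C * A⁻¹ * B) := by
  have : Invertible A := hA.invertible
  rw [isUnit_fromBlocks_iff_of_invertible₁₁, invOf_eq_nonsing_inv, inv_inv_of_invertible,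
    Matrix.mul_assoc (C * A⁻¹),
    mul_nonsing_inv_cancel_left _ _ ((isUnit_iff_isUnit_det A).mp hA)]

theorem Matrix.PosDef.sub_mul_inv_mul_of_transpose_eq_neg {g B : Matrix n n ℝ} (hg : g.PosDef)
    (hB : Bᵀ = -B) : (g - B * g⁻¹ * B).PosDef := by
  have hBt : (Bᵀ * g⁻¹ * B).PosSemidef := by
    simpa using hg.inv.posSemidef.conjTranspose_mul_mul_same B
  convert hg.add_posSemidef hBt using 1
  rw [hB, Matrix.neg_mul, Matrix.neg_mul, sub_eq_add_neg]

-- Both sides of `S * (g⁻¹ * B) = B * g⁻¹ * S` expand to `B - B * g⁻¹ * B * g⁻¹ * B`.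
theorem Matrix.inv_mul_mul_inv_sub_comm {g B : Matrix n n K} (hg : IsUnit g)
    (hS : IsUnit (g - B * g⁻¹ * B)) :
    g⁻¹ * B * (g - B * g⁻¹ * B)⁻¹ = (g - B * g⁻¹ * B)⁻¹ * B * g⁻¹ := by
  have hgdet := (isUnit_iff_isUnit_det g).mp hg
  have : Invertible (g - B * g⁻¹ * B) := hS.invertible
  rw [mul_inv_eq_iff_eq_mul_of_invertible, Matrix.mul_assoc, Matrix.mul_assoc, eq_comm,
    inv_mul_eq_iff_eq_mul_of_invertible]
  simp only [Matrix.sub_mul, Matrix.mul_sub, Matrix.mul_assoc,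
    mul_nonsing_inv_cancel_left _ _ hgdet, nonsing_inv_mul _ hgdet, Matrix.mul_one]

theorem Matrix.transpose_inv_mul_mul_inv_sub {g B : Matrix n n K} (hg : IsUnit g)
    (hgT : gᵀ = g) (hB : Bᵀ = -B) (hS : IsUnit (g - B * g⁻¹ * B)) :
    (g⁻¹ * B * (g - B * g⁻¹ * B)⁻¹)ᵀ = -(g⁻¹ * B * (g - B * g⁻¹ * B)⁻¹) := by
  have hST : (g - B * g⁻¹ * B)ᵀ = g - B * g⁻¹ * B := by
    rw [transpose_sub, transpose_mul, transpose_mul, transpose_nonsing_inv, hgT, hB]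
    simp only [Matrix.neg_mul, Matrix.mul_neg, neg_neg, Matrix.mul_assoc]
  rw [transpose_mul, transpose_mul, transpose_nonsing_inv, transpose_nonsing_inv, hST, hgT, hB,
    inv_mul_mul_inv_sub_comm hg hS]
  simp only [Matrix.neg_mul, Matrix.mul_neg, Matrix.mul_assoc]

end Block

theorem Tdual_Bfield_formula_general {m k : ℕ}
    (gb : Matrix (Fin m) (Fin m) ℝ) (gf : Matrix (Fin k) (Fin k) ℝ)
    (Bb : Matrix (Fin m) (Fin m) ℝ) (Bf : Matrix (Fin k) (Fin k) ℝ)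
    (Bm : Matrix (Fin m) (Fin k) ℝ)
    (hgb : gb.PosDef) (hgf : gf.PosDef)
    (hBf : Bfᵀ = -Bf) :
    let Btf : Matrix (Fin k) (Fin k) ℝ := -(gf⁻¹ * Bf * (gf - Bf * gf⁻¹ * Bf)⁻¹)
    let Btm : Matrix (Fin m) (Fin k) ℝ := -(Bm * Btf)
    let Btb : Matrix (Fin m) (Fin m) ℝ := Bb - Btm * Bmᵀ
    let Bt : Matrix (Fin m ⊕ Fin k) (Fin m ⊕ Fin k) ℝ :=
      Matrix.fromBlocks Btb Btm (-Btmᵀ) Btf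
    let gt : Matrix (Fin m ⊕ Fin k) (Fin m ⊕ Fin k) ℝ :=
      (Matrix.fromBlocks gb⁻¹ (gb⁻¹ * Bm) (Bmᵀ * gb⁻¹)
        (gf + Bmᵀ * gb⁻¹ * Bm - Bf * gf⁻¹ * Bf))⁻¹
    Bt * gt⁻¹ =
      Matrix.fromBlocks (Bb * gb⁻¹) (Bb * gb⁻¹ * Bm + Bm * gf⁻¹ * Bf)
        0 (-(gf⁻¹ * Bf)) := by
  intro Btf Btm Btb Bt gt
  set S := gf - Bf * gf⁻¹ * Bf
  have hS : IsUnit S := (hgf.sub_mul_inv_mul_of_transpose_eq_neg hBf).isUnit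
  have hSchur : gf + Bmᵀ * gb⁻¹ * Bm - Bf * gf⁻¹ * Bf - Bmᵀ * gb⁻¹ * Bm = S := by
    rw [add_sub_right_comm, add_sub_cancel_right]
  have hgt : gt⁻¹ = fromBlocks gb⁻¹ (gb⁻¹ * Bm) (Bmᵀ * gb⁻¹)
      (gf + Bmᵀ * gb⁻¹ * Bm - Bf * gf⁻¹ * Bf) :=
    nonsing_inv_nonsing_inv _ <| (isUnit_iff_isUnit_det _).mp <|
      (isUnit_fromBlocks_inv₁₁_iff hgb.isUnit).mpr (hSchur ▸ hS)
  have hBtf : Btfᵀ = -Btf := by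
    rw [transpose_neg, transpose_inv_mul_mul_inv_sub hgf.isUnit hgf.isHermitian hBf hS]
  have hBtfS : Btf * S = -(gf⁻¹ * Bf) := by
    rw [Matrix.neg_mul, nonsing_inv_mul_cancel_right _ _ ((isUnit_iff_isUnit_det S).mp hS)]
  rw [hgt, fromBlocks_mul_fromBlocks_of_transpose_eq_neg Bb Bm hBtf, hSchur,
    Matrix.mul_assoc Bm, hBtfS, Matrix.mul_neg, sub_neg_eq_add, Matrix.mul_assoc Bm]

theorem Tdual_Bfield_formula {m k : ℕ}
    (gb : Matrix (Fin m) (Fin m) ℝ) (gf : Matrix (Fin k) (Fin k) ℝ)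
    (Bb : Matrix (Fin m) (Fin m) ℝ) (Bf : Matrix (Fin k) (Fin k) ℝ)
    (Bm : Matrix (Fin m) (Fin k) ℝ)
    (hgb : gb.PosDef) (hgf : gf.PosDef)
    (hBb : Bbᵀ = -Bb) (hBf : Bfᵀ = -Bf) :
    let Btf : Matrix (Fin k) (Fin k) ℝ := -(gf⁻¹ * Bf * (gf - Bf * gf⁻¹ * Bf)⁻¹)
    let Btm : Matrix (Fin m) (Fin k) ℝ := -(Bm * Btf)
    let Btb : Matrix (Fin m) (Fin m) ℝ := Bb - Btm * Bmᵀ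
    let Bt : Matrix (Fin m ⊕ Fin k) (Fin m ⊕ Fin k) ℝ :=
      Matrix.fromBlocks Btb Btm (-Btmᵀ) Btf
    let gt : Matrix (Fin m ⊕ Fin k) (Fin m ⊕ Fin k) ℝ :=
      (Matrix.fromBlocks gb⁻¹ (gb⁻¹ * Bm) (Bmᵀ * gb⁻¹)
        (gf + Bmᵀ * gb⁻¹ * Bm - Bf * gf⁻¹ * Bf))⁻¹
    Bt * gt⁻¹ =
      Matrix.fromBlocks (Bb * gb⁻¹) (Bb * gb⁻¹ * Bm + Bm * gf⁻¹ * Bf)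
        0 (-(gf⁻¹ * Bf)) :=
  Tdual_Bfield_formula_general gb gf Bb Bf Bm hgb hgf hBf
end

section
/- Let g_b, g_f be symmetric positive definite, B_b, B_f skew-symmetric, B_m arbitrary, and let B̃ be the T-dual 2-form defined by B̃_f = -g_f⁻¹B_f(g_f - B_f g_f⁻¹B_f)⁻¹, B̃_m = -B_m B̃_f, B̃_b = B_b - B̃_m B_mᵀ. Then B̃ is invertible if and only if both B_b and B_f are invertible. -/
/-!
With `C = g_f - B_f g_f⁻¹ B_f`, which is positive definite because `B_f` is skew, the matrix
`G = [[g_b⁻¹, g_b⁻¹ B_m], [B_mᵀ g_b⁻¹, C + B_mᵀ g_b⁻¹ B_m]]` is invertible, and `B̃ G` is block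
upper triangular with diagonal blocks `B_b g_b⁻¹` and `B̃_f C = -g_f⁻¹ B_f`. The triangularity
uses that `B̃_f` is skew, which follows from `B_f g_f⁻¹ C = C g_f⁻¹ B_f`.
-/

open Matrix

namespace Matrix

variable {m n R : Type*} [Fintype m] [Fintype n]

lemma fromBlocks_mul_fromBlocks_eq_upper_triangular [Ring R] (A H : Matrix m m R)
    (P : Matrix m n R) (Q : Matrix n m R) (X C : Matrix n n R) :
    fromBlocks (A + P * X * Q) (-(P * X)) (-(X * Q)) X *
        fromBlocks H (H * P) (Q * H) (C + Q * H * P) =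
      fromBlocks (A * H) (A * H * P - P * X * C) 0 (X * C) := by
  simp only [fromBlocks_multiply, Matrix.add_mul, Matrix.mul_add, Matrix.neg_mul,
    Matrix.mul_assoc]
  congr 1 <;> abel

variable [DecidableEq m] [DecidableEq n]

lemma isUnit_fromBlocks_mul_mul_add_iff [CommRing R] (H : Matrix m m R) (P : Matrix m n R)
    (Q : Matrix n m R) (C : Matrix n n R) :
    IsUnit (fromBlocks H (H * P) (Q * H) (C + Q * H * P)) ↔ IsUnit H ∧ IsUnit C := by
  have hldu : fromBlocks H (H * P) (Q * H) (C + Q * H * P) =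
      fromBlocks 1 0 Q 1 * fromBlocks H 0 0 C * fromBlocks 1 P 0 1 := by
    simp only [fromBlocks_multiply, Matrix.one_mul, Matrix.mul_one, Matrix.zero_mul,
      Matrix.mul_zero, add_zero, zero_add, Matrix.mul_assoc, add_comm C]
  rw [hldu, IsUnit.mul_right_iff (by simp), IsUnit.mul_left_iff (by simp),
    isUnit_fromBlocks_zero₂₁]

open scoped ComplexOrder in
lemma posDef_sub_mul_inv_mul {𝕜 : Type*} [RCLike 𝕜] {g B : Matrix n n 𝕜} (hg : g.PosDef)
    (hB : Bᴴ = -B) : (g - B * g⁻¹ * B).PosDef := by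
  have hBgB : (Bᴴ * g⁻¹ * B).PosSemidef := hg.inv.posSemidef.conjTranspose_mul_mul_same B
  rw [hB, Matrix.neg_mul, Matrix.neg_mul] at hBgB
  simpa only [sub_eq_add_neg] using hg.add_posSemidef hBgB

lemma transpose_inv_mul_mul_inv_sub_eq_neg [CommRing R] {g B : Matrix n n R} (hg : gᵀ = g)
    (hgu : IsUnit g.det) (hB : Bᵀ = -B) (hC : IsUnit (g - B * g⁻¹ * B).det) :
    (g⁻¹ * B * (g - B * g⁻¹ * B)⁻¹)ᵀ = -(g⁻¹ * B * (g - B * g⁻¹ * B)⁻¹) := by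
  set C := g - B * g⁻¹ * B
  have hCT : Cᵀ = C := by
    simp [C, transpose_nonsing_inv, hg, hB, Matrix.mul_assoc]
  have hcomm : B * g⁻¹ * C = C * (g⁻¹ * B) := by
    simp only [C, Matrix.mul_sub, Matrix.sub_mul, Matrix.mul_assoc, nonsing_inv_mul _ hgu,
      mul_nonsing_inv_cancel_left _ _ hgu, Matrix.mul_one]
  have hinv : C⁻¹ * (B * g⁻¹) = g⁻¹ * B * C⁻¹ := calc
    C⁻¹ * (B * g⁻¹) = C⁻¹ * (B * g⁻¹ * C) * C⁻¹ := by
      simp only [Matrix.mul_assoc, mul_nonsing_inv _ hC, Matrix.mul_one]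
    _ = g⁻¹ * B * C⁻¹ := by rw [hcomm, nonsing_inv_mul_cancel_left _ _ hC]
  rw [transpose_mul, transpose_mul, transpose_nonsing_inv, transpose_nonsing_inv, hCT, hB, hg,
    Matrix.neg_mul, Matrix.mul_neg, Matrix.mul_assoc, hinv, Matrix.mul_assoc]

end Matrix

theorem Tdual_Bfield_invertible_iff_general {m k : ℕ}
    (gb : Matrix (Fin m) (Fin m) ℝ) (gf : Matrix (Fin k) (Fin k) ℝ)
    (Bb : Matrix (Fin m) (Fin m) ℝ) (Bf : Matrix (Fin k) (Fin k) ℝ)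
    (Bm : Matrix (Fin m) (Fin k) ℝ)
    (hgb : gb.PosDef) (hgf : gf.PosDef)
    (hBf : Bfᵀ = -Bf) :
    let Btf : Matrix (Fin k) (Fin k) ℝ := -(gf⁻¹ * Bf * (gf - Bf * gf⁻¹ * Bf)⁻¹)
    let Btm : Matrix (Fin m) (Fin k) ℝ := -(Bm * Btf)
    let Btb : Matrix (Fin m) (Fin m) ℝ := Bb - Btm * Bmᵀ
    let Bt : Matrix (Fin m ⊕ Fin k) (Fin m ⊕ Fin k) ℝ :=
      Matrix.fromBlocks Btb Btm (-Btmᵀ) Btf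
    IsUnit Bt ↔ IsUnit Bb ∧ IsUnit Bf := by
  intro Btf Btm Btb Bt
  set C := gf - Bf * gf⁻¹ * Bf
  have hC : IsUnit C := (posDef_sub_mul_inv_mul hgf hBf).isUnit
  have hCdet : IsUnit C.det := (isUnit_iff_isUnit_det C).mp hC
  have hgfT : gfᵀ = gf := hgf.isHermitian.eq
  have hBtf : Btfᵀ = -Btf := by
    rw [transpose_neg, transpose_inv_mul_mul_inv_sub_eq_neg hgfT
      ((isUnit_iff_isUnit_det gf).mp hgf.isUnit) hBf hCdet]
  have hBt : Bt = fromBlocks (Bb + Bm * Btf * Bmᵀ) (-(Bm * Btf)) (-(Btf * Bmᵀ)) Btf := by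
    simp only [Bt, Btb, Btm, transpose_neg, transpose_mul, hBtf, neg_neg, Matrix.neg_mul,
      sub_neg_eq_add]
  have hBtfC : Btf * C = -(gf⁻¹ * Bf) := by
    rw [Matrix.neg_mul, nonsing_inv_mul_cancel_right _ _ hCdet]
  have hgbinv : IsUnit gb⁻¹ := isUnit_nonsing_inv_iff.mpr hgb.isUnit
  have hG := (isUnit_fromBlocks_mul_mul_add_iff gb⁻¹ Bm Bmᵀ C).mpr ⟨hgbinv, hC⟩
  rw [← IsUnit.mul_right_iff hG, hBt, fromBlocks_mul_fromBlocks_eq_upper_triangular,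
    isUnit_fromBlocks_zero₂₁, hBtfC, IsUnit.neg_iff, IsUnit.mul_right_iff hgbinv,
    IsUnit.mul_left_iff (isUnit_nonsing_inv_iff.mpr hgf.isUnit)]

theorem Tdual_Bfield_invertible_iff {m k : ℕ}
    (gb : Matrix (Fin m) (Fin m) ℝ) (gf : Matrix (Fin k) (Fin k) ℝ)
    (Bb : Matrix (Fin m) (Fin m) ℝ) (Bf : Matrix (Fin k) (Fin k) ℝ)
    (Bm : Matrix (Fin m) (Fin k) ℝ)
    (hgb : gb.PosDef) (hgf : gf.PosDef)
    (hBb : Bbᵀ = -Bb) (hBf : Bfᵀ = -Bf) :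
    let Btf : Matrix (Fin k) (Fin k) ℝ := -(gf⁻¹ * Bf * (gf - Bf * gf⁻¹ * Bf)⁻¹)
    let Btm : Matrix (Fin m) (Fin k) ℝ := -(Bm * Btf)
    let Btb : Matrix (Fin m) (Fin m) ℝ := Bb - Btm * Bmᵀ
    let Bt : Matrix (Fin m ⊕ Fin k) (Fin m ⊕ Fin k) ℝ :=
      Matrix.fromBlocks Btb Btm (-Btmᵀ) Btf
    IsUnit Bt ↔ IsUnit Bb ∧ IsUnit Bf :=
  Tdual_Bfield_invertible_iff_general gb gf Bb Bf Bm hgb hgf hBf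
end
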